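/- For every symmetric N-linear form ψ on ℂ^k, the maximum of |ψ(u₁,…,u_N)| over N-tuples of unit vectors equals the maximum of |ψ(α,…,α)| over single unit vectors α; that is, the polarization constant of finite-dimensional complex Hilbert space is 1 for symmetric multilinear forms. -/

import Mathlib

/-!
Among the maximizers of `‖ψ u‖` on the compact product of unit spheres, take one that also
maximizes `‖∑ l, u l‖`. If two of its coordinates `x ≠ y` differed, freezing the others gives a
symmetric bilinear form `B` whose maximum `M` over pairs of unit vectors is attained at `(x, y)`.
The identity `B (x + y) (x + y) - B (x - y) (x - y) = 4 B x y`, together with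
`‖B z z‖ ≤ M ‖z‖²` and `‖x + y‖² + ‖x - y‖² = 4`, forces `‖B w w‖ = M` for the unit vector `w`
in the direction of `x + y`. Replacing both `x` and `y` by `w` or `-w` keeps `ψ` maximal and, for
the right sign, strictly increases `‖∑ l, u l‖` since `‖x + y‖ < 2`. So all coordinates agree.
-/

open Function Metric Set

theorem Finset.sum_univ_update {ι G : Type*} [Fintype ι] [DecidableEq ι] [AddCommGroup G]
    (f : ι → G) (i : ι) (b : G) : ∑ l, update f i b l = ∑ l, f l - f i + b := by
  rw [Finset.sum_update_of_mem (Finset.mem_univ i),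
    Finset.sum_eq_add_sum_sdiff_singleton_of_mem (Finset.mem_univ i) f]
  abel

theorem MultilinearMap.continuous_of_finiteDimensional {𝕜 ι E F : Type*}
    [NontriviallyNormedField 𝕜] [CompleteSpace 𝕜] [Fintype ι]
    [NormedAddCommGroup E] [NormedSpace 𝕜 E] [FiniteDimensional 𝕜 E]
    [NormedAddCommGroup F] [NormedSpace 𝕜 F]
    (ψ : MultilinearMap 𝕜 (fun _ : ι => E) F) : Continuous ψ := by
  classical
  let b := Module.finBasis 𝕜 E
  have hexpand : ⇑ψ = fun u => ∑ r : ι → Fin (Module.finrank 𝕜 E),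
      (∏ i, b.coord (r i) (u i)) • ψ (fun i => b (r i)) := by
    funext u
    conv_lhs => rw [show u = fun i => ∑ j, b.coord j (u i) • b j from
      funext fun i => (b.sum_repr (u i)).symm]
    simp only [ψ.map_sum, ψ.map_smul_univ]
  rw [hexpand]
  refine continuous_finsetSum _ fun r _ => Continuous.smul ?_ continuous_const
  exact continuous_finsetProd _ fun i _ =>
    (b.coord (r i)).continuous_of_finiteDimensional.comp (continuous_apply i)

theorem norm_add_sq_add_norm_sub_sq_of_norm_eq_one (𝕜 : Type*) {E : Type*} [RCLike 𝕜]
    [NormedAddCommGroup E] [InnerProductSpace 𝕜 E] {x y : E} (hx : ‖x‖ = 1) (hy : ‖y‖ = 1) :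
    ‖x + y‖ ^ 2 + ‖x - y‖ ^ 2 = 4 := by
  have := parallelogram_law_with_norm 𝕜 x y
  rw [hx, hy] at this
  linear_combination this

theorem norm_add_lt_two_of_ne (𝕜 : Type*) {E : Type*} [RCLike 𝕜] [NormedAddCommGroup E]
    [InnerProductSpace 𝕜 E] {x y : E} (hx : ‖x‖ = 1) (hy : ‖y‖ = 1) (hne : x ≠ y) :
    ‖x + y‖ < 2 := by
  have hpos : 0 < ‖x - y‖ := norm_pos_iff.mpr (sub_ne_zero.mpr hne)
  have := norm_add_sq_add_norm_sub_sq_of_norm_eq_one 𝕜 hx hy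
  nlinarith [norm_nonneg (x + y)]

section InnerProduct

variable {𝕜 E : Type*} [RCLike 𝕜] [NormedAddCommGroup E] [InnerProductSpace 𝕜 E]

open RCLike

theorem norm_lt_norm_add_smul_of_re_inner_nonneg {S w : E} (hw : w ≠ 0) {c : ℝ} (hc : c ≠ 0)
    (h : 0 ≤ c * re (inner 𝕜 S w)) : ‖S‖ < ‖S + (c : 𝕜) • w‖ := by
  have hsq : ‖S + (c : 𝕜) • w‖ ^ 2 = ‖S‖ ^ 2 + 2 * (c * re (inner 𝕜 S w)) + c ^ 2 * ‖w‖ ^ 2 := by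
    rw [norm_add_sq (𝕜 := 𝕜), inner_smul_right, re_ofReal_mul, norm_smul, norm_ofReal, mul_pow,
      sq_abs]
  have hpos : 0 < c ^ 2 * ‖w‖ ^ 2 := by positivity
  exact lt_of_pow_lt_pow_left₀ 2 (norm_nonneg _) (by linarith)

theorem exists_norm_lt_norm_sub_smul_add_two_smul (S : E) {w : E} (hw : w ≠ 0) {a : ℝ}
    (ha : |a| < 2) : ∃ w' ∈ ({w, -w} : Set E), ‖S‖ < ‖S - (a : 𝕜) • w + (2 : 𝕜) • w'‖ := by
  obtain ⟨ha₁, ha₂⟩ := abs_lt.mp ha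
  rcases le_total 0 (re (inner 𝕜 S w)) with h | h
  · refine ⟨w, by simp, ?_⟩
    convert norm_lt_norm_add_smul_of_re_inner_nonneg hw (c := 2 - a) (by linarith)
      (mul_nonneg (by linarith) h) using 2
    push_cast; module
  · refine ⟨-w, by simp, ?_⟩
    convert norm_lt_norm_add_smul_of_re_inner_nonneg hw (c := -2 - a) (by linarith)
      (mul_nonneg_of_nonpos_of_nonpos (by linarith) h) using 2
    push_cast; module

namespace LinearMap

variable (B : E →ₗ[𝕜] E →ₗ[𝕜] 𝕜) {M : ℝ}

theorem norm_apply_self_le (hM : ∀ p q : E, ‖p‖ = 1 → ‖q‖ = 1 → ‖B p q‖ ≤ M) (z : E) :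
    ‖B z z‖ ≤ M * ‖z‖ ^ 2 := by
  rcases eq_or_ne z 0 with rfl | hz
  · simp
  obtain ⟨w, hw, hzw⟩ : ∃ w : E, ‖w‖ = 1 ∧ z = (‖z‖ : 𝕜) • w :=
    ⟨(‖z‖ : 𝕜)⁻¹ • z, norm_smul_inv_norm hz, by
      rw [smul_smul, mul_inv_cancel₀ (by simpa using hz), one_smul]⟩
  calc ‖B z z‖ = ‖B ((‖z‖ : 𝕜) • w) ((‖z‖ : 𝕜) • w)‖ := by rw [← hzw]
    _ = ‖z‖ ^ 2 * ‖B w w‖ := by simp [norm_smul]; ring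
    _ ≤ M * ‖z‖ ^ 2 := by nlinarith [hM w w hw hw, sq_nonneg ‖z‖]

theorem exists_norm_apply_self_eq (hB : ∀ p q, B p q = B q p)
    (hM : ∀ p q : E, ‖p‖ = 1 → ‖q‖ = 1 → ‖B p q‖ ≤ M) {x y : E} (hx : ‖x‖ = 1) (hy : ‖y‖ = 1)
    (hxy : ‖B x y‖ = M) :
    ∃ w : E, ‖w‖ = 1 ∧ ‖B w w‖ = M ∧ x + y = (‖x + y‖ : 𝕜) • w := by
  have hpol : B (x + y) (x + y) - B (x - y) (x - y) = 4 * B x y := by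
    simp only [map_add, map_sub, add_apply, sub_apply, hB y x]; ring
  have hdiag : M * ‖x + y‖ ^ 2 ≤ ‖B (x + y) (x + y)‖ := by
    have h4 : 4 * M ≤ ‖B (x + y) (x + y)‖ + ‖B (x - y) (x - y)‖ := by
      calc 4 * M = ‖B (x + y) (x + y) - B (x - y) (x - y)‖ := by
            rw [hpol, norm_mul, hxy]; norm_num
        _ ≤ _ := norm_sub_le _ _
    have hsq : M * ‖x + y‖ ^ 2 = 4 * M - M * ‖x - y‖ ^ 2 := by
      linear_combination M * norm_add_sq_add_norm_sub_sq_of_norm_eq_one 𝕜 hx hy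
    linarith [B.norm_apply_self_le hM (x - y)]
  rcases eq_or_ne (x + y) 0 with hxy0 | hxy0
  · refine ⟨x, hx, ?_, by simp [hxy0]⟩
    rwa [eq_neg_of_add_eq_zero_right hxy0, map_neg, norm_neg] at hxy
  · have hs : 0 < ‖x + y‖ := norm_pos_iff.mpr hxy0
    refine ⟨(‖x + y‖ : 𝕜)⁻¹ • (x + y), norm_smul_inv_norm hxy0, ?_, ?_⟩
    · refine le_antisymm (hM _ _ (norm_smul_inv_norm hxy0) (norm_smul_inv_norm hxy0)) ?_
      simp only [map_smul, smul_apply, smul_eq_mul, norm_mul, norm_inv, norm_ofReal, abs_norm]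
      rw [← mul_assoc, ← mul_inv, ← sq, le_inv_mul_iff₀ (by positivity), mul_comm]
      exact hdiag
    · rw [smul_smul, mul_inv_cancel₀ (by simpa using hxy0), one_smul]

end LinearMap

end InnerProduct

namespace MultilinearMap

section Pair

variable {R ι M N : Type*} [CommSemiring R] [AddCommMonoid M] [Module R M] [AddCommMonoid N]
  [Module R N] [DecidableEq ι] (ψ : MultilinearMap R (fun _ : ι => M) N) (u : ι → M) {i j : ι}

def toLinearMap₂ (hij : i ≠ j) : M →ₗ[R] M →ₗ[R] N :=
  LinearMap.mk₂ R (fun p q => ψ (update (update u i p) j q))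
    (fun p p' q => by simp only [update_comm hij]; exact ψ.map_update_add _ i p p')
    (fun c p q => by simp only [update_comm hij]; exact ψ.map_update_smul _ i c p)
    (fun p q q' => ψ.map_update_add _ j q q')
    (fun c p q => ψ.map_update_smul _ j c q)

theorem toLinearMap₂_apply (hij : i ≠ j) (p q : M) :
    ψ.toLinearMap₂ u hij p q = ψ (update (update u i p) j q) := rfl

theorem toLinearMap₂_apply_self (hij : i ≠ j) : ψ.toLinearMap₂ u hij (u i) (u j) = ψ u := by
  simp [toLinearMap₂_apply]

theorem toLinearMap₂_comm (hsymm : ∀ (σ : Equiv.Perm ι) v, ψ (v ∘ σ) = ψ v) (hij : i ≠ j)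
    (p q : M) : ψ.toLinearMap₂ u hij p q = ψ.toLinearMap₂ u hij q p := by
  rw [toLinearMap₂_apply, toLinearMap₂_apply, ← hsymm (Equiv.swap i j),
    Equiv.comp_swap_eq_update]
  simp [update_comm hij]

end Pair

variable {𝕜 ι E : Type*} [RCLike 𝕜] [NormedAddCommGroup E] [InnerProductSpace 𝕜 E]
  {ψ : MultilinearMap 𝕜 (fun _ : ι => E) 𝕜}

theorem norm_update_update_eq_one [DecidableEq ι] {u : ι → E} (hu : ∀ l, ‖u l‖ = 1) {i j : ι}
    {p q : E} (hp : ‖p‖ = 1) (hq : ‖q‖ = 1) (l : ι) : ‖update (update u i p) j q l‖ = 1 := by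
  rcases eq_or_ne l j with rfl | hlj
  · simpa using hq
  rcases eq_or_ne l i with rfl | hli
  · simpa [hlj] using hp
  · simpa [hlj, hli] using hu l

theorem exists_norm_eq_and_norm_sum_lt [Fintype ι] [DecidableEq ι]
    (hsymm : ∀ (σ : Equiv.Perm ι) v, ψ (v ∘ σ) = ψ v) {u : ι → E} (hu : ∀ l, ‖u l‖ = 1)
    (hmax : ∀ v : ι → E, (∀ l, ‖v l‖ = 1) → ‖ψ v‖ ≤ ‖ψ u‖)
    {i j : ι} (hij : i ≠ j) (hne : u i ≠ u j) :
    ∃ v : ι → E, (∀ l, ‖v l‖ = 1) ∧ ‖ψ v‖ = ‖ψ u‖ ∧ ‖∑ l, u l‖ < ‖∑ l, v l‖ := by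
  set B := ψ.toLinearMap₂ u hij
  obtain ⟨w, hw, hBw, hsum⟩ := B.exists_norm_apply_self_eq (ψ.toLinearMap₂_comm u hsymm hij)
    (fun p q hp hq => hmax _ (norm_update_update_eq_one hu hp hq)) (hu i) (hu j)
    (by rw [toLinearMap₂_apply_self])
  obtain ⟨w', hw', hlt⟩ := exists_norm_lt_norm_sub_smul_add_two_smul (𝕜 := 𝕜) (∑ l, u l)
    (norm_ne_zero_iff.mp (hw.trans_ne one_ne_zero))
    (a := ‖u i + u j‖) (by rw [abs_norm]; exact norm_add_lt_two_of_ne 𝕜 (hu i) (hu j) hne)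
  have hw'1 : ‖w'‖ = 1 ∧ B w' w' = B w w := by rcases hw' with rfl | rfl <;> simp [hw]
  refine ⟨update (update u i w') j w', norm_update_update_eq_one hu hw'1.1 hw'1.1,
    (congrArg norm hw'1.2).trans hBw, ?_⟩
  rw [Finset.sum_univ_update, Finset.sum_univ_update, update_of_ne hij.symm]
  convert hlt using 2
  rw [← hsum]
  module

theorem exists_norm_eq_one_forall_norm_le_const [Fintype ι] [FiniteDimensional 𝕜 E]
    [Nontrivial E] (hsymm : ∀ (σ : Equiv.Perm ι) v, ψ (v ∘ σ) = ψ v) :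
    ∃ α : E, ‖α‖ = 1 ∧ ∀ v : ι → E, (∀ l, ‖v l‖ = 1) → ‖ψ v‖ ≤ ‖ψ fun _ => α‖ := by
  classical
  have := FiniteDimensional.proper_rclike 𝕜 E
  set T : Set (ι → E) := univ.pi fun _ => sphere 0 1
  have hT : ∀ v, v ∈ T ↔ ∀ l, ‖v l‖ = 1 := by simp [T]
  obtain ⟨α₀, hα₀⟩ : ∃ α : E, ‖α‖ = 1 :=
    let ⟨x, hx⟩ := exists_ne (0 : E)
    ⟨_, norm_smul_inv_norm (𝕜 := 𝕜) hx⟩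
  have hTc : IsCompact T := isCompact_univ_pi fun _ => isCompact_sphere 0 1
  have hψ : Continuous (‖ψ ·‖) := ψ.continuous_of_finiteDimensional.norm
  obtain ⟨u₀, hu₀, hmax₀⟩ :=
    hTc.exists_isMaxOn ⟨fun _ => α₀, (hT _).2 fun _ => hα₀⟩ hψ.continuousOn
  set K := T ∩ {v | ‖ψ v‖ = ‖ψ u₀‖}
  have hKc : IsCompact K := hTc.inter_right (isClosed_eq hψ continuous_const)
  have hsum : Continuous fun v : ι → E => ‖∑ l, v l‖ :=
    (continuous_finsetSum _ fun l _ => continuous_apply l).norm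
  obtain ⟨u, ⟨huT, huM⟩, hmax⟩ := hKc.exists_isMaxOn ⟨u₀, hu₀, rfl⟩ hsum.continuousOn
  have hconst : ∀ i j, u i = u j := by
    intro i j
    by_contra hne
    obtain ⟨v, hv, hvM, hlt⟩ := exists_norm_eq_and_norm_sum_lt hsymm ((hT u).1 huT)
      (fun v hv => huM ▸ hmax₀ ((hT v).2 hv)) (fun h => hne (congrArg u h)) hne
    exact (hmax ⟨(hT v).2 hv, hvM.trans huM⟩).not_gt hlt
  rcases isEmpty_or_nonempty ι with hι | ⟨⟨i₀⟩⟩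
  · refine ⟨α₀, hα₀, fun v hv => ?_⟩
    rw [Subsingleton.elim (fun _ => α₀) u₀]
    exact hmax₀ ((hT v).2 hv)
  · refine ⟨u i₀, (hT u).1 huT i₀, fun v hv => ?_⟩
    rw [show (fun _ => u i₀) = u from funext (hconst i₀), huM]
    exact hmax₀ ((hT v).2 hv)

end MultilinearMap

theorem stmt_6 (N k : ℕ) (hk : 0 < k)
    (ψ : MultilinearMap ℂ (fun _ : Fin N => EuclideanSpace ℂ (Fin k)) ℂ)
    (hsymm : ∀ (σ : Equiv.Perm (Fin N)) (v : Fin N → EuclideanSpace ℂ (Fin k)),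
      ψ (v ∘ σ) = ψ v) :
    ∃ M : ℝ,
      IsGreatest {x : ℝ | ∃ u : Fin N → EuclideanSpace ℂ (Fin k),
        (∀ i, ‖u i‖ = 1) ∧ x = ‖ψ u‖} M ∧
      IsGreatest {x : ℝ | ∃ α : EuclideanSpace ℂ (Fin k),
        ‖α‖ = 1 ∧ x = ‖ψ (fun _ => α)‖} M := by
  have : Nonempty (Fin k) := ⟨⟨0, hk⟩⟩
  obtain ⟨α, hα, hmax⟩ := ψ.exists_norm_eq_one_forall_norm_le_const hsymm
  refine ⟨‖ψ fun _ => α‖, ⟨⟨fun _ => α, fun _ => hα, rfl⟩, ?_⟩, ⟨α, hα, rfl⟩, ?_⟩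
  · rintro _ ⟨v, hv, rfl⟩
    exact hmax v hv
  · rintro _ ⟨β, hβ, rfl⟩
    exact hmax _ fun _ => hβ
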